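/- arXiv:1908.09965 — 4 statements merged into one kernel-verified Lean document; each statement's English description precedes it below -/
import Mathlib

section
/- For every integer n ≥ 1 and every ψ ∈ ℂ, there exists a nonzero point x ∈ ℂ^{n+2} at which all n+2 partial derivatives ∂f_ψ/∂X_i vanish simultaneously if and only if ψ^{n+2} = 1. (Equivalently, the projective hypersurface cut out by f_ψ is singular precisely when ψ^{n+2} = 1.) -/
/-!
At a critical point `x` the equations read `x i ^ (n+1) = ψ ∏_{j ≠ i} x j`; multiplying by `x i`
gives `x i ^ (n+2) = ψ P` with `P = ∏ j, x j`. If `x ≠ 0` then `P ≠ 0`, and taking the product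
over all `i` yields `P ^ (n+2) = ψ ^ (n+2) P ^ (n+2)`, so `ψ ^ (n+2) = 1`. Conversely, if
`ψ ^ (n+2) = 1` then the point `(ψ⁻¹, 1, …, 1)` is critical.
-/

open MvPolynomial Finset

section PartialDerivatives

variable {R σ : Type*}

lemma pderiv_prod_X_of_notMem [CommSemiring R] {i : σ} {s : Finset σ} (h : i ∉ s) :
    pderiv i (∏ j ∈ s, (X j : MvPolynomial σ R)) = 0 := by
  classical
  induction s using Finset.induction with
  | empty => simp
  | insert a t ha ih =>
    rw [prod_insert ha, pderiv_mul, ih (fun hi => h (mem_insert_of_mem hi)),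
      pderiv_X_of_ne (by rintro rfl; exact h (mem_insert_self _ t))]
    simp

lemma pderiv_prod_X [CommSemiring R] [Fintype σ] [DecidableEq σ] (i : σ) :
    pderiv i (∏ j, (X j : MvPolynomial σ R)) = ∏ j ∈ univ.erase i, X j := by
  rw [← mul_prod_erase univ _ (mem_univ i), pderiv_mul, pderiv_prod_X_of_notMem (notMem_erase i _),
    pderiv_X_self]
  simp

lemma pderiv_sum_X_pow [CommSemiring R] [Fintype σ] (i : σ) (d : ℕ) :
    pderiv i (∑ j, (X j : MvPolynomial σ R) ^ d) = (d : MvPolynomial σ R) * X i ^ (d - 1) := by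
  rw [map_sum, sum_eq_single i (fun j _ hji => by rw [pderiv_pow, pderiv_X_of_ne hji, mul_zero])
    (fun h => (h (mem_univ i)).elim), pderiv_pow, pderiv_X_self, mul_one]

lemma eval_pderiv_sum_X_pow_sub_C_mul_prod_X [CommRing R] [Fintype σ] [DecidableEq σ]
    (x : σ → R) (i : σ) (d : ℕ) (c : R) :
    eval x (pderiv i (∑ j, X j ^ d - C c * ∏ j, X j)) =
      d * x i ^ (d - 1) - c * ∏ j ∈ univ.erase i, x j := by
  rw [map_sub, pderiv_C_mul, pderiv_sum_X_pow, pderiv_prod_X]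
  simp

end PartialDerivatives

section CriticalPoints

variable {K ι : Type*} [Fintype ι] [DecidableEq ι] {m : ℕ}

lemma pow_eq_one_of_pow_eq_mul_prod_erase [CommRing K] [IsDomain K] (hm : Fintype.card ι = m + 1)
    {ψ : K} {x : ι → K} (hx : x ≠ 0) (h : ∀ i, x i ^ m = ψ * ∏ j ∈ univ.erase i, x j) :
    ψ ^ (m + 1) = 1 := by
  have hpow : ∀ i, x i ^ (m + 1) = ψ * ∏ j, x j := fun i => by
    rw [← mul_prod_erase univ x (mem_univ i), pow_succ', h i]
    ring
  have hP : ∏ j, x j ≠ 0 := fun hP => hx <| funext fun i => by simpa [hP] using hpow i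
  refine mul_right_cancel₀ (pow_ne_zero (m + 1) hP) ?_
  calc ψ ^ (m + 1) * (∏ j, x j) ^ (m + 1)
      = ∏ _i : ι, ψ * ∏ j, x j := by rw [prod_const, card_univ, hm, mul_pow]
    _ = ∏ i, x i ^ (m + 1) := prod_congr rfl fun i _ => (hpow i).symm
    _ = 1 * (∏ j, x j) ^ (m + 1) := by rw [prod_pow, one_mul]

lemma exists_ne_zero_pow_eq_mul_prod_erase [Field K] (hm : Fintype.card ι = m + 1) {ψ : K}
    (hψ : ψ ^ (m + 1) = 1) : ∃ x : ι → K, x ≠ 0 ∧ ∀ i, x i ^ m = ψ * ∏ j ∈ univ.erase i, x j := by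
  obtain ⟨i₀⟩ : Nonempty ι := Fintype.card_pos_iff.mp (by omega)
  have hψ0 : ψ ≠ 0 := by rintro rfl; simp at hψ
  refine ⟨Function.update 1 i₀ ψ⁻¹, fun h => ?_, fun i => ?_⟩
  · simpa [hψ0] using congrFun h i₀
  rcases eq_or_ne i i₀ with rfl | hi
  · rw [prod_update_of_notMem (notMem_erase i _), Function.update_self, Pi.one_def, prod_const_one,
      mul_one, inv_pow, inv_eq_iff_eq_inv, ← mul_eq_one_iff_eq_inv₀ hψ0, ← pow_succ, hψ]
  · rw [prod_update_of_mem (mem_erase.mpr ⟨hi.symm, mem_univ _⟩), Function.update_of_ne hi,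
      Pi.one_def, one_pow, prod_const_one, mul_one, mul_inv_cancel₀ hψ0]

end CriticalPoints

theorem fermat_pencil_singular_iff_general (n : ℕ) (ψ : ℂ) :
    (∃ x : Fin (n + 2) → ℂ, x ≠ 0 ∧ ∀ i : Fin (n + 2),
        MvPolynomial.eval x (MvPolynomial.pderiv i
          ((∑ j : Fin (n + 2), MvPolynomial.X j ^ (n + 2)) -
            MvPolynomial.C (((n : ℂ) + 2) * ψ) * ∏ j : Fin (n + 2), MvPolynomial.X j)) = 0)
    ↔ ψ ^ (n + 2) = 1 := by
  have hd : (n : ℂ) + 2 ≠ 0 := by exact_mod_cast (n + 1).succ_ne_zero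
  have hcrit : ∀ (x : Fin (n + 2) → ℂ) i,
      eval x (pderiv i (∑ j, X j ^ (n + 2) - C (((n : ℂ) + 2) * ψ) * ∏ j, X j)) = 0 ↔
        x i ^ (n + 1) = ψ * ∏ j ∈ univ.erase i, x j := fun x i => by
    rw [eval_pderiv_sum_X_pow_sub_C_mul_prod_X, show n + 2 - 1 = n + 1 from rfl, Nat.cast_add,
      Nat.cast_ofNat, mul_assoc, ← mul_sub, mul_eq_zero, or_iff_right hd, sub_eq_zero]
  simp only [hcrit]
  exact ⟨fun ⟨_, hx, h⟩ => pow_eq_one_of_pow_eq_mul_prod_erase (by simp) hx h,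
    exists_ne_zero_pow_eq_mul_prod_erase (by simp)⟩

/-- The Fermat pencil polynomial `f_ψ` has a nonzero common zero of all its
partial derivatives if and only if `ψ^{n+2} = 1`, i.e. the projective hypersurface cut out
by `f_ψ` is singular precisely when `ψ^{n+2} = 1`. -/
theorem fermat_pencil_singular_iff (n : ℕ) (hn : 1 ≤ n) (ψ : ℂ) :
    (∃ x : Fin (n + 2) → ℂ, x ≠ 0 ∧ ∀ i : Fin (n + 2),
        MvPolynomial.eval x (MvPolynomial.pderiv i
          ((∑ j : Fin (n + 2), MvPolynomial.X j ^ (n + 2)) -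
            MvPolynomial.C (((n : ℂ) + 2) * ψ) * ∏ j : Fin (n + 2), MvPolynomial.X j)) = 0)
    ↔ ψ ^ (n + 2) = 1 :=
  fermat_pencil_singular_iff_general n ψ
end

section
/- Fix an integer n ≥ 1, let U ⊆ ℂ ∖ {0, 1} be open, and let f_0, …, f_n be holomorphic solutions of the Picard–Fuchs equation 𝒟ₙ f_j = 0 on U. Then their Wronskian W(φ) = det((1/i!)·ϑ^i f_j(φ))_{0 ≤ i,j ≤ n} satisfies the first-order differential equation (1 − φ)·ϑW(φ) = ((n+1)/2)·φ·W(φ) for all φ ∈ U. -/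
/-!
Differentiating the determinant row by row, `ϑ` sends row `i` of the Wronskian matrix to `i + 1`
times row `i + 1`, so all terms but the last have a repeated row and `ϑW = (n + 1) D`, where `D`
is the determinant with last row `ϑ^{n+1} f_j / (n+1)!`. Expanding `∏ (ϑ + k/(n+2))` as a
polynomial in `ϑ`, the Picard–Fuchs equation reads
`ϑ^{n+1} f = φ (ϑ^{n+1} f + ((n+1)/2) ϑ^n f + lower terms)`, the coefficient `(n+1)/2 = ∑ k/(n+2)`
coming from Vieta's formula. The lower terms are earlier rows, so `D = φ D + (φ/2) W`.
-/

/-- The logarithmic derivative operator `ϑf(φ) = φ·f′(φ)`. -/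
noncomputable def theta (f : ℂ → ℂ) : ℂ → ℂ := fun z => z * deriv f z

/-- The operator `∏_{k=1}^{m} (ϑ + k/(n+2))` (composition of operators),
where `(ϑ + c)g = ϑg + c·g`. -/
noncomputable def pfProd (n : ℕ) : ℕ → (ℂ → ℂ) → ℂ → ℂ
  | 0, f => f
  | m + 1, f => fun z =>
      theta (pfProd n m f) z + (((m : ℂ) + 1) / ((n : ℂ) + 2)) * pfProd n m f z

/-- `f` is a solution of the Picard–Fuchs equation `𝒟ₙ f = 0` on `U`. -/
def IsPFSol (n : ℕ) (U : Set ℂ) (f : ℂ → ℂ) : Prop :=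
  ∀ z ∈ U, theta^[n + 1] f z = z * pfProd n (n + 1) f z

/-- The Wronskian `W(φ) = det((1/i!)·ϑ^i f_j(φ))_{0 ≤ i,j ≤ n}`. -/
noncomputable def wronskian (n : ℕ) (f : Fin (n + 1) → ℂ → ℂ) : ℂ → ℂ := fun z =>
  Matrix.det (Matrix.of fun i j : Fin (n + 1) =>
    (((i : ℕ).factorial : ℂ))⁻¹ * theta^[(i : ℕ)] (f j) z)

open Finset Matrix

theorem Matrix.hasDerivAt_det {𝕜 ι : Type*} [NontriviallyNormedField 𝕜] [Fintype ι]
    [DecidableEq ι] {M : 𝕜 → Matrix ι ι 𝕜} {M' : Matrix ι ι 𝕜} {x : 𝕜}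
    (hM : ∀ i, HasDerivAt (fun t => M t i) (M' i) x) :
    HasDerivAt (fun t => (M t).det) (∑ i, ((M x).updateRow i (M' i)).det) x := by
  let D : ContinuousMultilinearMap 𝕜 (fun _ : ι => ι → 𝕜) 𝕜 :=
    ⟨detRowAlternating.toMultilinearMap, by
      change Continuous fun A : Matrix ι ι 𝕜 => A.det
      fun_prop⟩
  refine (HasFDerivAt.multilinear_comp D fun i => (hM i).hasFDerivAt).hasDerivAt.congr_deriv ?_
  simp only [_root_.sum_apply, ContinuousLinearMap.comp_apply,
    ContinuousLinearMap.toSpanSingleton_apply, one_smul,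
    ContinuousMultilinearMap.toContinuousLinearMap_apply, updateRow, D]
  rfl

theorem Matrix.det_updateRow_smul_add_sum {R ι : Type*} [CommRing R] [Fintype ι] [DecidableEq ι]
    (A : Matrix ι ι R) (j : ι) (s : R) (u c : ι → R) :
    (A.updateRow j (s • u + ∑ k, c k • A k)).det = s * (A.updateRow j u).det + c j * A.det := by
  rw [det_updateRow_add, det_updateRow_smul, det_updateRow_sum, smul_eq_mul]

section Theta

variable {z : ℂ}

theorem theta_const_mul (c : ℂ) (g : ℂ → ℂ) :
    theta (fun w => c * g w) z = c * theta g z := by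
  simp only [theta, deriv_const_mul_field']
  ring

theorem theta_finset_sum {ι : Type*} (s : Finset ι) (a : ι → ℂ) {g : ι → ℂ → ℂ}
    (hg : ∀ i ∈ s, DifferentiableAt ℂ (g i) z) :
    theta (fun w => ∑ i ∈ s, a i * g i w) z = ∑ i ∈ s, a i * theta (g i) z := by
  simp only [theta, deriv_fun_sum fun i hi => (hg i hi).const_mul (a i), deriv_const_mul_field',
    mul_sum]
  exact sum_congr rfl fun i _ => by ring

theorem Filter.EventuallyEq.theta_eq {f g : ℂ → ℂ} (h : f =ᶠ[nhds z] g) :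
    theta f z = theta g z := by
  rw [theta, theta, h.deriv_eq]

theorem AnalyticOnNhd.theta_iterate {U : Set ℂ} {f : ℂ → ℂ} (hf : AnalyticOnNhd ℂ f U) (i : ℕ) :
    AnalyticOnNhd ℂ (theta^[i] f) U := by
  induction i with
  | zero => exact hf
  | succ i ih =>
    rw [Function.iterate_succ_apply']
    exact analyticOnNhd_id.mul ih.deriv

theorem theta_det {ι : Type*} [Fintype ι] [DecidableEq ι] {M : ℂ → Matrix ι ι ℂ}
    (hM : ∀ i j, DifferentiableAt ℂ (fun t => M t i j) z) :
    theta (fun t => (M t).det) z =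
      ∑ k, ((M z).updateRow k fun j => theta (fun t => M t k j) z).det := by
  have hrows : ∀ i, HasDerivAt (fun t => M t i) (fun j => deriv (fun t => M t i j) z) z :=
    fun i => hasDerivAt_pi.2 fun j => (hM i j).hasDerivAt
  rw [theta, (hasDerivAt_det hrows).deriv, mul_sum]
  refine sum_congr rfl fun k _ => ?_
  rw [← det_updateRow_smul]
  rfl

end Theta

section PicardFuchsPolynomial

open Polynomial

noncomputable def pfPoly (n m : ℕ) : ℂ[X] :=
  ∏ k ∈ range m, (X + C (((k : ℂ) + 1) / ((n : ℂ) + 2)))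

theorem pfPoly_succ (n m : ℕ) :
    pfPoly n (m + 1) = pfPoly n m * (X + C (((m : ℂ) + 1) / ((n : ℂ) + 2))) :=
  prod_range_succ _ _

theorem pfPoly_coeff_self (n m : ℕ) : (pfPoly n m).coeff m = 1 := by
  rw [pfPoly, prod_X_add_C_coeff _ _ (card_range m).ge]
  simp

theorem pfPoly_succ_coeff (n m : ℕ) :
    (pfPoly n (m + 1)).coeff m = ((m : ℂ) + 1) * ((m : ℂ) + 2) / (2 * ((n : ℂ) + 2)) := by
  rw [pfPoly, prod_X_add_C_coeff _ _ (by simp), card_range, Nat.add_sub_cancel_left,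
    powersetCard_one, sum_map]
  simp only [Function.Embedding.coeFn_mk, prod_singleton, ← sum_div]
  have gauss : ∀ m : ℕ, ∑ k ∈ range (m + 1), ((k : ℂ) + 1) = ((m : ℂ) + 1) * ((m : ℂ) + 2) / 2 := by
    intro m
    induction m with
    | zero => norm_num
    | succ m ih => rw [sum_range_succ, ih]; push_cast; ring
  rw [gauss]
  field_simp

theorem pfPoly_coeff_eq_zero {n m i : ℕ} (h : m < i) : (pfPoly n m).coeff i = 0 := by
  refine coeff_eq_zero_of_natDegree_lt ((natDegree_prod_le _ _).trans_lt ?_)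
  simpa [natDegree_X_add_C] using h

theorem pfProd_eq_sum {U : Set ℂ} (hU : IsOpen U) {f : ℂ → ℂ} (hf : AnalyticOnNhd ℂ f U)
    (n m : ℕ) {z : ℂ} (hz : z ∈ U) :
    pfProd n m f z = ∑ i ∈ range (m + 1), (pfPoly n m).coeff i * theta^[i] f z := by
  induction m generalizing z with
  | zero => simp [pfProd, pfPoly]
  | succ m ih =>
    have hdiff : ∀ i ∈ range (m + 1), DifferentiableAt ℂ (theta^[i] f) z :=
      fun i _ => (hf.theta_iterate i z hz).differentiableAt
    have hθ : theta (pfProd n m f) z =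
        ∑ i ∈ range (m + 1), (pfPoly n m).coeff i * theta^[i + 1] f z := by
      have hloc : pfProd n m f =ᶠ[nhds z]
          fun w => ∑ i ∈ range (m + 1), (pfPoly n m).coeff i * theta^[i] f w :=
        Filter.eventually_of_mem (hU.mem_nhds hz) fun w hw => ih hw
      rw [hloc.theta_eq, theta_finset_sum _ _ hdiff]
      simp only [Function.iterate_succ_apply']
    simp only [pfProd]
    rw [hθ, ih hz, pfPoly_succ]
    simp only [mul_add, coeff_add, coeff_mul_C, add_mul, sum_add_distrib]
    rw [sum_range_succ' _ (m + 1), sum_range_succ _ (m + 1), pfPoly_coeff_eq_zero (lt_add_one m)]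
    simp only [Function.iterate_succ, Function.comp_apply, mul_sum, coeff_mul_X, mul_coeff_zero,
      coeff_X_zero, mul_zero, Function.iterate_zero, id_eq, zero_mul, add_zero, add_right_inj]
    exact sum_congr rfl fun i _ => by ring

end PicardFuchsPolynomial

noncomputable def wronskianRow {n : ℕ} (f : Fin (n + 1) → ℂ → ℂ) (i : ℕ) (z : ℂ) :
    Fin (n + 1) → ℂ :=
  fun j => ((i.factorial : ℂ))⁻¹ * theta^[i] (f j) z

noncomputable def wronskianMatrix (n : ℕ) (f : Fin (n + 1) → ℂ → ℂ) (z : ℂ) :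
    Matrix (Fin (n + 1)) (Fin (n + 1)) ℂ :=
  of fun i => wronskianRow f i z

theorem wronskianMatrix_apply (n : ℕ) (f : Fin (n + 1) → ℂ → ℂ) (z : ℂ) (i : Fin (n + 1)) :
    wronskianMatrix n f z i = wronskianRow f i z :=
  rfl

theorem wronskian_eq_det (n : ℕ) (f : Fin (n + 1) → ℂ → ℂ) :
    wronskian n f = fun z => (wronskianMatrix n f z).det :=
  rfl

theorem theta_wronskianRow {n : ℕ} (f : Fin (n + 1) → ℂ → ℂ) (i : ℕ) (z : ℂ) :
    (fun j => theta (fun t => wronskianRow f i t j) z) =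
      ((i : ℂ) + 1) • wronskianRow f (i + 1) z := by
  funext j
  simp only [wronskianRow, theta_const_mul, Nat.factorial_succ, Function.iterate_succ_apply',
    Pi.smul_apply, smul_eq_mul]
  push_cast
  field_simp

theorem theta_wronskian {n : ℕ} {f : Fin (n + 1) → ℂ → ℂ} {z : ℂ}
    (hf : ∀ (i : ℕ) j, DifferentiableAt ℂ (theta^[i] (f j)) z) :
    theta (wronskian n f) z = ((n : ℂ) + 1) *
      ((wronskianMatrix n f z).updateRow (Fin.last n) (wronskianRow f (n + 1) z)).det := by
  rw [wronskian_eq_det, theta_det (M := wronskianMatrix n f) fun i j => (hf i j).const_mul _]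
  simp only [wronskianMatrix_apply, theta_wronskianRow, det_updateRow_smul, Fin.sum_univ_castSucc,
    Fin.val_last]
  have hrepeat : ∀ k : Fin n, ((wronskianMatrix n f z).updateRow
      k.castSucc (wronskianRow f (k.castSucc + 1) z)).det = 0 := by
    intro k
    rw [Fin.val_castSucc, ← Fin.val_succ]
    exact det_updateRow_eq_zero Fin.castSucc_lt_succ.ne'
  simp only [hrepeat, mul_zero, sum_const_zero, zero_add]

theorem wronskianRow_succ_eq_of_isPFSol {n : ℕ} {U : Set ℂ} (hU : IsOpen U)
    {f : Fin (n + 1) → ℂ → ℂ} (hf : ∀ j, AnalyticOnNhd ℂ (f j) U)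
    (hsol : ∀ j, IsPFSol n U (f j)) {z : ℂ} (hz : z ∈ U) :
    wronskianRow f (n + 1) z = z • wronskianRow f (n + 1) z +
      ∑ k : Fin (n + 1), (z * (pfPoly n (n + 1)).coeff k * (k : ℕ).factorial / (n + 1).factorial) •
        wronskianMatrix n f z k := by
  funext j
  have hpf := hsol j z hz
  rw [pfProd_eq_sum hU (hf j) _ _ hz, sum_range_succ, pfPoly_coeff_self, one_mul,
    ← Fin.sum_univ_eq_sum_range (fun i => (pfPoly n (n + 1)).coeff i * theta^[i] (f j) z)] at hpf
  have hsum : ∑ k : Fin (n + 1), z * (pfPoly n (n + 1)).coeff k * (k : ℕ).factorial /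
      (n + 1).factorial * ((((k : ℕ).factorial : ℂ))⁻¹ * theta^[k] (f j) z) =
      z / (n + 1).factorial * ∑ k : Fin (n + 1), (pfPoly n (n + 1)).coeff k * theta^[k] (f j) z := by
    rw [mul_sum]
    refine sum_congr rfl fun k _ => ?_
    have : ((k : ℕ).factorial : ℂ) ≠ 0 := Nat.cast_ne_zero.2 (Nat.factorial_ne_zero _)
    field_simp
  simp only [wronskianMatrix, wronskianRow, of_apply, Pi.add_apply, Pi.smul_apply,
    Finset.sum_apply, smul_eq_mul, hsum]
  linear_combination (((n + 1).factorial : ℂ))⁻¹ * hpf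

theorem det_updateRow_wronskianRow_succ_of_isPFSol {n : ℕ} {U : Set ℂ} (hU : IsOpen U)
    {f : Fin (n + 1) → ℂ → ℂ} (hf : ∀ j, AnalyticOnNhd ℂ (f j) U)
    (hsol : ∀ j, IsPFSol n U (f j)) {z : ℂ} (hz : z ∈ U) :
    ((wronskianMatrix n f z).updateRow (Fin.last n) (wronskianRow f (n + 1) z)).det =
      z * ((wronskianMatrix n f z).updateRow (Fin.last n) (wronskianRow f (n + 1) z)).det +
        z / 2 * wronskian n f z := by
  conv_lhs => rw [wronskianRow_succ_eq_of_isPFSol hU hf hsol hz, det_updateRow_smul_add_sum]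
  rw [Fin.val_last, pfPoly_succ_coeff, Nat.factorial_succ, wronskian_eq_det]
  have hfact : (n.factorial : ℂ) ≠ 0 := Nat.cast_ne_zero.2 (Nat.factorial_ne_zero n)
  have hn2 : (n : ℂ) + 2 ≠ 0 := by norm_cast
  push_cast
  field_simp

theorem wronskian_first_order_ODE_general (n : ℕ) (U : Set ℂ) (hU : IsOpen U)
    (f : Fin (n + 1) → ℂ → ℂ)
    (hhol : ∀ j, DifferentiableOn ℂ (f j) U)
    (hsol : ∀ j, IsPFSol n U (f j)) :
    ∀ φ ∈ U, (1 - φ) * theta (wronskian n f) φ =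
      (((n : ℂ) + 1) / 2) * φ * wronskian n f φ := by
  intro φ hφ
  have hf : ∀ j, AnalyticOnNhd ℂ (f j) U := fun j => (hhol j).analyticOnNhd hU
  rw [theta_wronskian fun i j => ((hf j).theta_iterate i φ hφ).differentiableAt]
  linear_combination ((n : ℂ) + 1) * det_updateRow_wronskianRow_succ_of_isPFSol hU hf hsol hφ

/-- the Wronskian of holomorphic solutions `f_0, …, f_n` of the Picard–Fuchs
equation on an open `U ⊆ ℂ ∖ {0,1}` satisfies `(1 − φ)·ϑW(φ) = ((n+1)/2)·φ·W(φ)` on `U`. -/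
theorem wronskian_first_order_ODE (n : ℕ) (hn : 1 ≤ n) (U : Set ℂ) (hU : IsOpen U)
    (hUsub : U ⊆ {(0 : ℂ), 1}ᶜ)
    (f : Fin (n + 1) → ℂ → ℂ)
    (hhol : ∀ j, DifferentiableOn ℂ (f j) U)
    (hsol : ∀ j, IsPFSol n U (f j)) :
    ∀ φ ∈ U, (1 - φ) * theta (wronskian n f) φ =
      (((n : ℂ) + 1) / 2) * φ * wronskian n f φ :=
  wronskian_first_order_ODE_general n U hU f hhol hsol
end

section
/- Let V be a vector space over ℚ of dimension n+1 and let N : V → V be a linear map with N^{n+1} = 0 and N^n ≠ 0. Suppose A_0,…,A_n and A′_0,…,A′_n are two bases of V each satisfying N(A_0) = 0, N(A_i) = Σ_{k=0}^{i−1} C(i,k)·A_k and N(A′_0) = 0, N(A′_i) = Σ_{k=0}^{i−1} C(i,k)·A′_k for 1 ≤ i ≤ n. Then there exist rational numbers c_0, c_1, …, c_n with c_0 ≠ 0 such that A′_i = Σ_{j=0}^{i} C(i,j)·c_{i−j}·A_j for every 0 ≤ i ≤ n; that is, the transition matrix between two such bases is an invertible lower-triangular matrix of Pascal type. -/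
/-!
Call `e_0, …, e_n` a Pascal family for `N` if `N e_i = ∑_{k<i} C(i,k) e_k`. Since
`C(i,j) C(j,m) = C(i,k) C(k,m)` whenever `j + k = i + m`, for every sequence `c` the vectors
`S_i = ∑_{j ≤ i} C(i,j) c_{i-j} e_j` again form a Pascal family. When `e` is a basis, `ker N` is
spanned by `e_0`, so by induction on `i` a Pascal family is determined by the `e_0`-coordinates
of its members. Choosing `c_i` to be the `e_0`-coordinate of `A'_i` therefore gives `A' = S`,
and `c_0 ≠ 0` because `A'_0 = c_0 A_0` is a basis vector.
-/

open Finset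

theorem Nat.choose_mul_choose_eq_of_add_eq {i j k m : ℕ} (hmj : m ≤ j) (hmk : m ≤ k)
    (h : j + k = i + m) : i.choose j * j.choose m = i.choose k * k.choose m := by
  rw [Nat.choose_mul hmj, Nat.choose_mul hmk,
    ← Nat.choose_symm (n := i - m) (k := k - m) (by omega)]
  congr 2
  omega

theorem Finset.sum_Ioc_choose_mul_choose_reflect {R : Type*} [CommSemiring R] (f : ℕ → R)
    (i m : ℕ) :
    ∑ j ∈ Ioc m i, ((i.choose j * j.choose m : ℕ) : R) * f (i - j) =
      ∑ k ∈ Ico m i, ((i.choose k * k.choose m : ℕ) : R) * f (k - m) := by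
  refine sum_nbij' (fun j ↦ i + m - j) (fun k ↦ i + m - k) ?_ ?_ ?_ ?_ ?_ <;>
    intro j hj <;> simp only [mem_Ioc, mem_Ico] at hj ⊢
  any_goals omega
  rw [Nat.choose_mul_choose_eq_of_add_eq (k := i + m - j) hj.1.le (by omega) (by omega)]
  congr 2
  omega

theorem Fin.sum_ite_val_mem {M : Type*} [AddCommMonoid M] {n : ℕ} {s : Finset ℕ}
    (hs : ∀ j ∈ s, j < n) (g : ℕ → M) :
    ∑ j : Fin n, (if (j : ℕ) ∈ s then g j else 0) = ∑ j ∈ s, g j := by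
  rw [Fin.sum_univ_eq_sum_range (fun j ↦ if j ∈ s then g j else 0), sum_ite_mem,
    inter_eq_right.mpr fun j hj ↦ mem_range.mpr (hs j hj)]

section Pascal

variable {R V : Type*} {n : ℕ}

def IsPascalFamily [Semiring R] [AddCommMonoid V] [Module R V] (N : Module.End R V)
    (e : Fin n → V) : Prop :=
  ∀ i : Fin n, N (e i) =
    ∑ k : Fin n, if (k : ℕ) < (i : ℕ) then (((i : ℕ).choose (k : ℕ) : R)) • e k else 0

def pascalComb [Semiring R] [AddCommMonoid V] [Module R V] (e : Fin n → V) (c : ℕ → R)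
    (i : Fin n) : V :=
  ∑ j : Fin n, if (j : ℕ) ≤ (i : ℕ) then (((i : ℕ).choose j : R) * c (i - j)) • e j else 0

theorem pascalComb_eq_sum_smul [Semiring R] [AddCommMonoid V] [Module R V] (e : Fin n → V)
    (c : ℕ → R) (i : Fin n) :
    pascalComb e c i =
      ∑ j : Fin n, (if (j : ℕ) ≤ i then ((i : ℕ).choose j : R) * c (i - j) else 0) • e j := by
  simp only [pascalComb, ite_smul, zero_smul]

namespace IsPascalFamily

theorem map_sum_smul [CommSemiring R] [AddCommMonoid V] [Module R V] {N : Module.End R V}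
    {e : Fin n → V} (he : IsPascalFamily N e) (x : Fin n → R) :
    N (∑ j, x j • e j) =
      ∑ m : Fin n,
        (∑ j : Fin n, if (m : ℕ) < j then x j * (j : ℕ).choose m else 0) • e m := by
  simp only [IsPascalFamily] at he
  simp only [map_sum, map_smul, he, smul_sum, sum_smul, ite_smul, zero_smul, smul_ite, smul_zero,
    smul_smul]
  exact sum_comm

theorem pascalComb [CommSemiring R] [AddCommMonoid V] [Module R V] {N : Module.End R V}
    {e : Fin n → V} (he : IsPascalFamily N e) (c : ℕ → R) :
    IsPascalFamily N (_root_.pascalComb e c) := by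
  intro i
  have lhs : N (_root_.pascalComb e c i) =
      ∑ m : Fin n, (∑ j : Fin n, if (j : ℕ) ∈ Ioc (m : ℕ) i then
        (((i : ℕ).choose j * (j : ℕ).choose m : ℕ) : R) * c (i - j) else 0) • e m := by
    rw [pascalComb_eq_sum_smul, he.map_sum_smul]
    refine sum_congr rfl fun m _ ↦ congrArg (· • e m) (sum_congr rfl fun j _ ↦ ?_)
    simp only [mem_Ioc]
    split_ifs <;> first | (exfalso; omega) | (push_cast; ring)
  have rhs :
      (∑ k : Fin n, if (k : ℕ) < i then ((i : ℕ).choose k : R) • _root_.pascalComb e c k else 0) =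
      ∑ m : Fin n, (∑ k : Fin n, if (k : ℕ) ∈ Ico (m : ℕ) i then
        (((i : ℕ).choose k * (k : ℕ).choose m : ℕ) : R) * c (k - m) else 0) • e m := by
    simp only [← ite_zero_smul]
    simp only [pascalComb_eq_sum_smul, smul_sum, smul_smul]
    rw [sum_comm]
    simp only [← sum_smul]
    refine sum_congr rfl fun m _ ↦ congrArg (· • e m) (sum_congr rfl fun k _ ↦ ?_)
    simp only [mem_Ico]
    split_ifs <;> first | (exfalso; omega) | (push_cast; ring)
  rw [lhs, rhs]
  refine sum_congr rfl fun m _ ↦ congrArg (· • e m) ?_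
  rw [Fin.sum_ite_val_mem (g := fun j ↦ ((i.val.choose j * j.choose m : ℕ) : R) * c (i - j)),
    Fin.sum_ite_val_mem (g := fun k ↦ ((i.val.choose k * k.choose m : ℕ) : R) * c (k - m)),
    sum_Ioc_choose_mul_choose_reflect]
  all_goals
    intro j hj
    simp only [mem_Ioc, mem_Ico] at hj
    omega

theorem sub [Ring R] [AddCommGroup V] [Module R V] {N : Module.End R V} {f g : Fin n → V}
    (hf : IsPascalFamily N f) (hg : IsPascalFamily N g) : IsPascalFamily N (f - g) := by
  intro i
  rw [Pi.sub_apply, map_sub, hf i, hg i, ← sum_sub_distrib]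
  refine sum_congr rfl fun k _ ↦ ?_
  split_ifs
  · rw [Pi.sub_apply, smul_sub]
  · rw [sub_zero]

theorem repr_map [CommSemiring R] [AddCommMonoid V] [Module R V] {N : Module.End R V}
    {e : Module.Basis (Fin n) R V} (he : IsPascalFamily N e) (x : V) (m : Fin n) :
    e.repr (N x) m =
      ∑ j : Fin n, if (m : ℕ) < j then e.repr x j * (j : ℕ).choose m else 0 := by
  conv_lhs => rw [← e.sum_repr x, he.map_sum_smul, e.repr_sum_self]

variable [CommRing R] [NoZeroDivisors R] [CharZero R] [AddCommGroup V] [Module R V]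
  {N : Module.End R V} {e : Module.Basis (Fin (n + 1)) R V}

theorem eq_smul_of_map_eq_zero (he : IsPascalFamily N e) {x : V} (hx : N x = 0) :
    x = e.repr x 0 • e 0 := by
  classical
  -- If `j ≥ 1` is the largest index with `x_j ≠ 0`, then `N x` has `e_{j-1}`-coordinate `j x_j`.
  suffices h : ∀ j ≠ 0, e.repr x j = 0 by
    conv_lhs => rw [← e.sum_repr x]
    exact sum_eq_single 0 (fun j _ hj ↦ by rw [h j hj, zero_smul]) (by simp)
  by_contra! hne
  obtain ⟨j, hj, hmax⟩ :=
    exists_max_image ({j | j ≠ 0 ∧ e.repr x j ≠ 0} : Finset (Fin (n + 1))) (fun j ↦ (j : ℕ))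
      (by simpa [Finset.Nonempty] using hne)
  obtain ⟨m, rfl⟩ := Fin.exists_succ_eq.mpr (mem_filter.mp hj).2.1
  have hm := (mem_filter.mp hj).2.2
  have hcoeff := he.repr_map x m.castSucc
  rw [hx, map_zero, Finsupp.zero_apply, sum_eq_single m.succ] at hcoeff
  · simp only [Fin.val_castSucc, Fin.val_succ, Nat.lt_add_one, if_true,
      Nat.choose_succ_self_right] at hcoeff
    exact hm <| (mul_eq_zero.mp hcoeff.symm).resolve_right <|
      Nat.cast_ne_zero.mpr (Nat.succ_ne_zero _)
  · intro k _ hk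
    rw [ite_eq_right_iff]
    intro hmk
    by_contra hxk
    have hk0 : k ≠ 0 := by rintro rfl; simp at hmk
    have hkm := hmax k (mem_filter.mpr ⟨mem_univ _, hk0, left_ne_zero_of_mul hxk⟩)
    simp only [Fin.val_castSucc, Fin.val_succ] at hmk hkm
    exact hk (Fin.ext (by simp only [Fin.val_succ]; omega))
  · simp

theorem eq_zero_of_repr_zero (he : IsPascalFamily N e) {f : Fin (n + 1) → V}
    (hf : IsPascalFamily N f) (h0 : ∀ i, e.repr (f i) 0 = 0) : f = 0 := by
  funext i
  induction i using WellFoundedLT.induction with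
  | _ i ih =>
    have hNf : N (f i) = 0 := by
      rw [hf i]
      refine sum_eq_zero fun k _ ↦ ?_
      split_ifs with hk
      · rw [ih k hk, Pi.zero_apply, smul_zero]
      · rfl
    rw [he.eq_smul_of_map_eq_zero hNf, h0, zero_smul, Pi.zero_apply]

theorem eq_of_repr_zero_eq (he : IsPascalFamily N e) {f g : Fin (n + 1) → V}
    (hf : IsPascalFamily N f) (hg : IsPascalFamily N g)
    (h0 : ∀ i, e.repr (f i) 0 = e.repr (g i) 0) : f = g :=
  sub_eq_zero.mp <| he.eq_zero_of_repr_zero (hf.sub hg) fun i ↦ by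
    rw [Pi.sub_apply, map_sub, Finsupp.sub_apply, h0, sub_self]

end IsPascalFamily

theorem Module.Basis.repr_pascalComb_zero [Semiring R] [AddCommMonoid V] [Module R V]
    (e : Module.Basis (Fin (n + 1)) R V) (c : ℕ → R) (i : Fin (n + 1)) :
    e.repr (pascalComb e c i) 0 = c i := by
  rw [pascalComb_eq_sum_smul, e.repr_sum_self]
  simp

end Pascal

theorem pascal_basis_transition_general (n : ℕ) (V : Type*) [AddCommGroup V] [Module ℚ V]
    (N : Module.End ℚ V)
    (b b' : Module.Basis (Fin (n + 1)) ℚ V)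
    (hb : ∀ i : Fin (n + 1), N (b i) =
      ∑ k : Fin (n + 1),
        if (k : ℕ) < (i : ℕ) then (((i : ℕ).choose (k : ℕ) : ℚ)) • b k else 0)
    (hb' : ∀ i : Fin (n + 1), N (b' i) =
      ∑ k : Fin (n + 1),
        if (k : ℕ) < (i : ℕ) then (((i : ℕ).choose (k : ℕ) : ℚ)) • b' k else 0) :
    ∃ c : ℕ → ℚ, c 0 ≠ 0 ∧
      ∀ i : Fin (n + 1), b' i =
        ∑ j : Fin (n + 1),
          if (j : ℕ) ≤ (i : ℕ) then
            ((((i : ℕ).choose (j : ℕ) : ℚ)) * c ((i : ℕ) - (j : ℕ))) • b j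
          else 0 := by
  replace hb : IsPascalFamily N b := hb
  let c : ℕ → ℚ := fun m ↦ if h : m < n + 1 then b.repr (b' ⟨m, h⟩) 0 else 0
  have hc (i : Fin (n + 1)) : c i = b.repr (b' i) 0 := dif_pos i.isLt
  have hb'_eq : b' = pascalComb b c :=
    hb.eq_of_repr_zero_eq hb' (hb.pascalComb c) fun i ↦ by rw [b.repr_pascalComb_zero, hc]
  refine ⟨c, fun hc0 ↦ b'.ne_zero 0 ?_, fun i ↦ congrFun hb'_eq i⟩
  have hN0 : N (b' 0) = 0 := by simpa using hb' 0
  rw [hb.eq_smul_of_map_eq_zero hN0, ← hc, Fin.val_zero, hc0, zero_smul]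

/-- two bases of an `(n+1)`-dimensional `ℚ`-vector space each satisfying the
Pascal-type relations `N(A_0) = 0`, `N(A_i) = Σ_{k<i} C(i,k)·A_k` for a nilpotent `N` with
`N^{n+1} = 0`, `N^n ≠ 0`, are related by an invertible lower-triangular transition matrix
of Pascal type: `A′_i = Σ_{j≤i} C(i,j)·c_{i−j}·A_j` with `c_0 ≠ 0`. -/
theorem pascal_basis_transition (n : ℕ) (V : Type*) [AddCommGroup V] [Module ℚ V]
    [FiniteDimensional ℚ V] (hdim : Module.finrank ℚ V = n + 1)
    (N : Module.End ℚ V) (hN1 : N ^ (n + 1) = 0) (hN2 : N ^ n ≠ 0)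
    (b b' : Module.Basis (Fin (n + 1)) ℚ V)
    (hb : ∀ i : Fin (n + 1), N (b i) =
      ∑ k : Fin (n + 1),
        if (k : ℕ) < (i : ℕ) then (((i : ℕ).choose (k : ℕ) : ℚ)) • b k else 0)
    (hb' : ∀ i : Fin (n + 1), N (b' i) =
      ∑ k : Fin (n + 1),
        if (k : ℕ) < (i : ℕ) then (((i : ℕ).choose (k : ℕ) : ℚ)) • b' k else 0) :
    ∃ c : ℕ → ℚ, c 0 ≠ 0 ∧
      ∀ i : Fin (n + 1), b' i =
        ∑ j : Fin (n + 1),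
          if (j : ℕ) ≤ (i : ℕ) then
            ((((i : ℕ).choose (j : ℕ) : ℚ)) * c ((i : ℕ) - (j : ℕ))) • b j
          else 0 :=
  pascal_basis_transition_general n V N b b' hb hb'
end

section
/- Fix an integer n ≥ 1. An (n+1)×(n+1) complex matrix M commutes with the Pascal matrix T₀ if and only if M is of Pascal type, i.e., there exists a sequence c_0,…,c_n of complex numbers such that M_{i,j} = C(i,j)·c_{i−j} for j ≤ i and M_{i,j} = 0 for j > i. In other words, the centralizer of T₀ in M_{n+1}(ℂ) is exactly the set of Pascal-type matrices. -/
/-!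
Pascal-type matrices multiply like exponential generating functions:
`pascal a * pascal b = pascal (binomConv a b)`, and binomial convolution is commutative, so
they all commute with `T₀ = pascal 1`. Conversely, if `M` commutes with `T₀`, subtract the
Pascal-type matrix with the same first column; the difference `N` commutes with every power
`T₀ ^ t = pascal (t ^ ·)`, whose first column is `(t ^ k)ₖ`, so `N` kills these vectors for all
`t : ℕ`. Being a Vandermonde family, they span, hence `N = 0`.
-/

open Finset Matrix

section

variable {R : Type*} [CommRing R]

-- The exponential generating function of `binomConv a b` is the product of those of `a` and `b`.
def binomConv (a b : ℕ → R) (d : ℕ) : R :=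
  ∑ p ∈ antidiagonal d, (d.choose p.1 : R) * a p.1 * b p.2

theorem binomConv_comm (a b : ℕ → R) : binomConv a b = binomConv b a := by
  ext d
  rw [binomConv, binomConv, ← Nat.sum_antidiagonal_swap]
  refine sum_congr rfl fun p hp => ?_
  rw [Nat.choose_symm_of_eq_add (mem_antidiagonal.mp hp).symm]
  simp only [Prod.fst_swap, Prod.snd_swap]
  ring

theorem binomConv_pow_one (t : R) : binomConv (t ^ ·) 1 = ((t + 1) ^ ·) := by
  ext d
  rw [binomConv, add_pow,
    ← Nat.sum_antidiagonal_eq_sum_range_succ fun k l => t ^ k * 1 ^ l * (d.choose k : R)]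
  refine sum_congr rfl fun p _ => ?_
  simp only [Pi.one_apply, one_pow]
  ring

end

namespace Matrix

variable {R : Type*} [CommRing R] {m : ℕ}

-- No case split is needed above the diagonal, where the binomial coefficient vanishes.
def pascal (c : ℕ → R) : Matrix (Fin m) (Fin m) R :=
  of fun i j => ((i : ℕ).choose j : R) * c (i - j)

theorem pascal_apply_eq_ite (c : ℕ → R) (i j : Fin m) :
    pascal c i j = if (j : ℕ) ≤ i then ((i : ℕ).choose j : R) * c (i - j) else 0 := by
  split_ifs with hji
  · rfl
  · simp [pascal, Nat.choose_eq_zero_of_lt (not_le.mp hji)]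

theorem pascal_apply_zero [NeZero m] (c : ℕ → R) (i : Fin m) : pascal c i 0 = c i := by
  simp [pascal]

theorem pascal_mul (a b : ℕ → R) :
    pascal a * pascal b = (pascal (binomConv a b) : Matrix (Fin m) (Fin m) R) := by
  ext i j
  simp only [mul_apply, pascal, of_apply]
  rw [Fin.sum_univ_eq_sum_range
      fun k => ((i : ℕ).choose k : R) * a (i - k) * ((k.choose j) * b (k - j)),
    binomConv_comm, binomConv,
    Nat.sum_antidiagonal_eq_sum_range_succ fun p q => ((i - j : ℕ).choose p : R) * b p * a q,
    mul_sum]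
  have hvanish (k : ℕ) (hk : k ∉ Ico (j : ℕ) (i + 1)) :
      ((i : ℕ).choose k : R) * a (i - k) * ((k.choose j) * b (k - j)) = 0 := by
    rcases lt_or_ge k j with hkj | hjk
    · simp [Nat.choose_eq_zero_of_lt hkj]
    · simp [Nat.choose_eq_zero_of_lt (by rw [mem_Ico] at hk; omega : (i : ℕ) < k)]
  rcases le_or_gt (j : ℕ) i with hji | hij
  · rw [← sum_subset (fun k hk => by simp at hk ⊢; omega) fun k _ hk => hvanish k hk,
      sum_Ico_eq_sum_range, show (i : ℕ) + 1 - j = (i - j : ℕ).succ by omega]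
    refine sum_congr rfl fun l _ => ?_
    have hchoose : ((i : ℕ).choose (j + l) : R) * ((j + l).choose j : ℕ)
        = ((i : ℕ).choose j : R) * ((i - j : ℕ).choose l : ℕ) := by
      have := Nat.choose_mul (n := i) (k := j + l) (s := j) (by omega)
      rw [Nat.add_sub_cancel_left] at this
      simpa only [Nat.cast_mul] using congrArg (Nat.cast : ℕ → R) this
    rw [show (i : ℕ) - (j + l) = i - j - l by omega, Nat.add_sub_cancel_left]
    linear_combination (a (i - j - l) * b l) * hchoose
  · rw [Nat.choose_eq_zero_of_lt hij, Nat.cast_zero]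
    simp only [zero_mul, sum_const_zero]
    exact sum_eq_zero fun k _ => hvanish k (by simp; omega)

theorem commute_pascal_pascal (a b : ℕ → R) :
    Commute (pascal a : Matrix (Fin m) (Fin m) R) (pascal b) := by
  rw [Commute, SemiconjBy, pascal_mul, pascal_mul, binomConv_comm]

theorem pascal_zero_pow_eq_one : (pascal (0 ^ ·) : Matrix (Fin m) (Fin m) R) = 1 := by
  ext i j
  rcases eq_or_ne i j with rfl | hij
  · simp [pascal]
  · have : (i : ℕ) ≠ j := Fin.val_ne_of_ne hij
    rw [one_apply_ne hij, pascal_apply_eq_ite]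
    split_ifs
    · rw [zero_pow (by omega), mul_zero]
    · rfl

theorem pascal_one_pow (t : ℕ) :
    (pascal 1 : Matrix (Fin m) (Fin m) R) ^ t = pascal ((t : R) ^ ·) := by
  induction t with
  | zero => simp [pascal_zero_pow_eq_one]
  | succ t ih =>
    rw [pow_succ, ih, pascal_mul, binomConv_pow_one, Nat.cast_succ]

section CharZero

variable [IsDomain R] [CharZero R]

theorem eq_zero_of_commute_pascal_one [NeZero m] {N : Matrix (Fin m) (Fin m) R}
    (hN : Commute N (pascal 1)) (h0 : ∀ i, N i 0 = 0) : N = 0 := by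
  have hpow (t : ℕ) (i : Fin m) : ∑ k : Fin m, N i k * (t : R) ^ (k : ℕ) = 0 := by
    have := congr_fun₂ (hN.pow_right t).eq i 0
    simpa [pascal_one_pow, mul_apply, pascal_apply_zero, h0] using this
  have hV : (vandermonde fun t : Fin m ↦ ((t : ℕ) : R)).det ≠ 0 :=
    det_vandermonde_ne_zero_iff.mpr fun s t h => Fin.ext (Nat.cast_injective h)
  funext i
  refine eq_zero_of_mulVec_eq_zero hV (funext fun t => ?_)
  simp only [mulVec, dotProduct, vandermonde_apply, Pi.zero_apply]
  rw [← hpow t i]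
  exact sum_congr rfl fun k _ => mul_comm _ _

theorem commute_pascal_one_iff [NeZero m] {M : Matrix (Fin m) (Fin m) R} :
    Commute M (pascal 1) ↔ ∃ c : ℕ → R, M = pascal c := by
  refine ⟨fun hM => ?_, fun ⟨c, hc⟩ => hc ▸ commute_pascal_pascal c 1⟩
  let c (k : ℕ) : R := if hk : k < m then M ⟨k, hk⟩ 0 else 0
  refine ⟨c, sub_eq_zero.mp <|
    eq_zero_of_commute_pascal_one (hM.sub_left (commute_pascal_pascal c 1)) fun i => ?_⟩
  simp [pascal_apply_zero, c]

end CharZero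

end Matrix

theorem pascal_centralizer_general (n : ℕ)
    (T₀ M : Matrix (Fin (n + 1)) (Fin (n + 1)) ℂ)
    (hT : ∀ i j : Fin (n + 1), T₀ i j = ((i : ℕ).choose (j : ℕ) : ℂ)) :
    M * T₀ = T₀ * M ↔
      ∃ c : ℕ → ℂ, ∀ i j : Fin (n + 1),
        M i j = if (j : ℕ) ≤ (i : ℕ) then
          ((i : ℕ).choose (j : ℕ) : ℂ) * c ((i : ℕ) - (j : ℕ)) else 0 := by
  have hT₀ : T₀ = pascal 1 := by ext i j; simp [pascal, hT]
  rw [hT₀]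
  simp_rw [← pascal_apply_eq_ite]
  exact commute_pascal_one_iff.trans (exists_congr fun c => Matrix.ext_iff.symm)

/-- an `(n+1)×(n+1)` complex matrix `M` commutes with the Pascal matrix `T₀`
if and only if `M` is of Pascal type, i.e. `M_{i,j} = C(i,j)·c_{i−j}` for `j ≤ i` and
`M_{i,j} = 0` for `j > i`, for some sequence `c`: the centralizer of `T₀` in `M_{n+1}(ℂ)`
is exactly the set of Pascal-type matrices. -/
theorem pascal_centralizer (n : ℕ) (hn : 1 ≤ n)
    (T₀ M : Matrix (Fin (n + 1)) (Fin (n + 1)) ℂ)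
    (hT : ∀ i j : Fin (n + 1), T₀ i j = ((i : ℕ).choose (j : ℕ) : ℂ)) :
    M * T₀ = T₀ * M ↔
      ∃ c : ℕ → ℂ, ∀ i j : Fin (n + 1),
        M i j = if (j : ℕ) ≤ (i : ℕ) then
          ((i : ℕ).choose (j : ℕ) : ℂ) * c ((i : ℕ) - (j : ℕ)) else 0 :=
  pascal_centralizer_general n T₀ M hT
end
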